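/- Every preference profile with exactly two voters (and any finite number m of alternatives) is 2-dimensional Euclidean. -/

import Mathlib

/-- A preference profile, given by a strict linear order `pref i` for each voter `i`
over the alternatives in `A`, is 2-dimensional Euclidean if the alternatives and
voters can be placed in the Euclidean plane such that each voter prefers the
alternative closer to her. -/
def IsEuclidean2D {A V : Type*} (pref : V → A → A → Prop) : Prop :=
  ∃ (EA : A → EuclideanSpace ℝ (Fin 2)) (EV : V → EuclideanSpace ℝ (Fin 2)),
    ∀ (i : V) (a b : A), a ≠ b →
      (pref i a b ↔ dist (EA a) (EV i) < dist (EA b) (EV i))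

/-- Key arithmetic fact: shifting far in one coordinate makes that coordinate dominate. -/
lemma key_arith (m xa ya xb yb : ℝ) (h : xa + 1 ≤ xb)
    (hxa : 0 ≤ xa) (hxb : xb < m) (hya : 0 ≤ ya) (hya' : ya < m)
    (_hyb : 0 ≤ yb) :
    (xa + m ^ 2) ^ 2 + ya ^ 2 < (xb + m ^ 2) ^ 2 + yb ^ 2 := by
  nlinarith [sq_nonneg m, sq_nonneg (m - 1), sq_nonneg yb, sq_nonneg (xb - xa)]

/-- Every preference profile with exactly two voters (and any finite number of
alternatives) is 2-dimensional Euclidean. -/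
theorem two_voter_profiles_are_2euclidean
    {A : Type*} [Fintype A]
    (pref : Fin 2 → A → A → Prop)
    (hpref : ∀ i, IsStrictTotalOrder A (pref i)) :
    IsEuclidean2D pref := by
  classical
  set m : ℕ := Fintype.card A with hm
  -- rank of an alternative under voter i
  let rk : Fin 2 → A → ℕ := fun i a => (Finset.univ.filter (fun c => pref i c a)).card
  have hrk_lt : ∀ i a, rk i a < m := by
    intro i a
    haveI := hpref i
    have h1 : (Finset.univ.filter (fun c => pref i c a)) ⊂ Finset.univ := by
      refine Finset.ssubset_univ_iff.2 ?_
      intro h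
      have : a ∈ Finset.univ.filter (fun c => pref i c a) := by
        rw [h]; exact Finset.mem_univ a
      simp only [Finset.mem_filter] at this
      exact irrefl_of (pref i) a this.2
    simpa [hm, Finset.card_univ] using Finset.card_lt_card h1
  have hrk : ∀ i a b, a ≠ b → (pref i a b ↔ rk i a < rk i b) := by
    intro i a b hab
    haveI := hpref i
    have fwd : ∀ x y : A, pref i x y → rk i x < rk i y := by
      intro x y h
      apply Finset.card_lt_card
      rw [Finset.ssubset_iff_of_subset]
      · refine ⟨x, ?_, ?_⟩
        · simp only [Finset.mem_filter, Finset.mem_univ, true_and]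
          exact h
        · simp only [Finset.mem_filter, Finset.mem_univ, true_and]
          exact irrefl_of (pref i) x
      · intro c hc
        simp only [Finset.mem_filter, Finset.mem_univ, true_and] at hc ⊢
        exact trans_of (pref i) hc h
    constructor
    · exact fwd a b
    · intro h
      rcases trichotomous_of (pref i) a b with h1 | h1 | h1
      · exact h1
      · exact absurd h1 hab
      · exact absurd (fwd b a h1) (by omega)
    -- the embedding
  refine ⟨fun a => !₂[(rk 0 a : ℝ), (rk 1 a : ℝ)],
          fun i => if i = 0 then !₂[-(m : ℝ) ^ 2, 0] else !₂[0, -(m : ℝ) ^ 2], ?_⟩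
  intro i a b hab
  have hd : ∀ p q : EuclideanSpace ℝ (Fin 2),
      dist p q = Real.sqrt ((p 0 - q 0) ^ 2 + (p 1 - q 1) ^ 2) := by
    intro p q
    rw [EuclideanSpace.dist_eq]
    simp [Fin.sum_univ_two, Real.dist_eq, sq_abs]
  have hsqrt : ∀ x y : ℝ, 0 ≤ x → 0 ≤ y → (Real.sqrt x < Real.sqrt y ↔ x < y) := by
    intro x y hx hy
    constructor
    · intro h
      by_contra hle
      push_neg at hle
      exact absurd (Real.sqrt_le_sqrt hle) (not_le.2 h)
    · exact Real.sqrt_lt_sqrt hx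
  have key : ∀ (j k : Fin 2) (x y : A),
      rk j x < rk j y →
      ((rk j x : ℝ) + (m : ℝ) ^ 2) ^ 2 + (rk k x : ℝ) ^ 2 <
      ((rk j y : ℝ) + (m : ℝ) ^ 2) ^ 2 + (rk k y : ℝ) ^ 2 := by
    intro j k x y h
    apply key_arith
    · have : rk j x + 1 ≤ rk j y := h
      exact_mod_cast this
    · positivity
    · exact_mod_cast hrk_lt j y
    · positivity
    · exact_mod_cast hrk_lt k x
    · positivity
  have htri : rk i a < rk i b ∨ rk i b < rk i a := by
    haveI := hpref i
    rcases trichotomous_of (pref i) a b with h1 | h1 | h1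
    · exact Or.inl ((hrk i a b hab).1 h1)
    · exact absurd h1 hab
    · exact Or.inr ((hrk i b a hab.symm).1 h1)
  rw [hrk i a b hab, hd, hd, hsqrt _ _ (by positivity) (by positivity)]
  fin_cases i <;> simp only [Fin.zero_eta, Fin.mk_one] at htri ⊢
  · norm_num [Matrix.cons_val_zero, Matrix.cons_val_one, Matrix.head_cons]
    constructor
    · intro h; exact key 0 1 a b h
    · intro h
      rcases htri with h1 | h1
      · exact h1
      · exact absurd (key 0 1 b a h1) (by linarith)
  · norm_num [Matrix.cons_val_zero, Matrix.cons_val_one, Matrix.head_cons]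
    constructor
    · intro h; have := key 1 0 a b h; linarith
    · intro h
      rcases htri with h1 | h1
      · exact h1
      · have := key 1 0 b a h1; linarith
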